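/- arXiv:1308.4287 — 2 statements merged into one kernel-verified Lean document; each statement's English description precedes it below -/
import Mathlib

section
/- For every integer d > 1 there exists a constant C = C(d) > 0 such that the following holds. Let U be a finite set of size u > 1, let S be a subset of U×{1,…,d} of size s ≥ 1 chosen uniformly at random, and set e_v = |S ∩ ({v}×{1,…,d})| for v ∈ U. Let (b_v)_{v∈U} be a family of independent random variables, each with distribution Bin(d, s/(d·u)). Then for every family (t_v)_{v∈U} of non-negative integers, P[∀ v ∈ U : e_v = t_v] = P[∀ v ∈ U : b_v = t_v | Σ_{v∈U} b_v = s] ≤ C·√u · P[∀ v ∈ U : b_v = t_v]. -/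
open Finset
open scoped Classical

noncomputable section

namespace RRG

/-- An `(n,d)`-configuration: a fixed-point-free involution of the clones `Fin n × Fin d`. -/
def IsConfig (n d : ℕ) (Γ : Fin n × Fin d → Fin n × Fin d) : Prop :=
  (∀ x, Γ (Γ x) = x) ∧ (∀ x, Γ x ≠ x)

/-- The type of `(n,d)`-configurations. -/
def Config (n d : ℕ) : Type :=
  {Γ : Fin n × Fin d → Fin n × Fin d // IsConfig n d Γ}

instance (n d : ℕ) : Fintype (Config n d) :=
  inferInstanceAs (Fintype {Γ : Fin n × Fin d → Fin n × Fin d // IsConfig n d Γ})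

/-- `e_Γ(A,B)`: the number of clones of vertices of `A` that `Γ` matches to clones of
vertices of `B`. -/
def eConf {n d : ℕ} (Γ : Config n d) (A B : Finset (Fin n)) : ℕ :=
  (univ.filter fun x : Fin n × Fin d => x.1 ∈ A ∧ (Γ.1 x).1 ∈ B).card

/-- The color class `σ⁻¹(i)` as a `Finset`. -/
def colorClass {n k : ℕ} (σ : Fin n → Fin k) (i : Fin k) : Finset (Fin n) :=
  univ.filter fun v => σ v = i

/-- `σ` is a proper `k`-coloring of the configuration `Γ`: no matched pair of clones is
monochromatic. -/
def ProperCol {n d k : ℕ} (Γ : Config n d) (σ : Fin n → Fin k) : Prop :=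
  ∀ x : Fin n × Fin d, σ ((Γ.1 x).1) ≠ σ x.1

/-- `σ` is balanced: every color class has size `n/k`. -/
def BalancedCol {n k : ℕ} (σ : Fin n → Fin k) : Prop :=
  ∀ i : Fin k, (colorClass σ i).card * k = n

/-- Overlap matrix entry `ρ_ij(σ,τ) = (k/n)·|σ⁻¹(i) ∩ τ⁻¹(j)|`. -/
def overlap {n k : ℕ} (σ τ : Fin n → Fin k) (i j : Fin k) : ℝ :=
  (k : ℝ) / (n : ℝ) * ((colorClass σ i ∩ colorClass τ j).card : ℝ)

/-- The cluster `C(σ)`: all balanced proper `k`-colorings `τ` with `ρ_ii(σ,τ) > 0.51` for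
all `i`. -/
def cluster {n d k : ℕ} (Γ : Config n d) (σ : Fin n → Fin k) : Finset (Fin n → Fin k) :=
  univ.filter fun τ : Fin n → Fin k =>
    BalancedCol τ ∧ ProperCol Γ τ ∧ ∀ i : Fin k, (0.51 : ℝ) < overlap σ τ i i

/-- `σ` is separable (w.r.t. the configuration `Γ`), with `κ = (ln k)^500 / k`. -/
def SeparableCol {n d k : ℕ} (Γ : Config n d) (σ : Fin n → Fin k) : Prop :=
  ∀ τ : Fin n → Fin k, BalancedCol τ → ProperCol Γ τ →
    ∀ i j : Fin k, (0.51 : ℝ) < overlap σ τ i j →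
      1 - (Real.log k) ^ (500 : ℕ) / (k : ℝ) ≤ overlap σ τ i j

/-- Probability of an event under the uniformly random `(n,d)`-configuration. -/
def confProb (n d : ℕ) (p : Config n d → Prop) : ℝ :=
  ((univ.filter fun Γ : Config n d => p Γ).card : ℝ) / (Fintype.card (Config n d) : ℝ)

/-- Expectation of a random variable under the uniformly random `(n,d)`-configuration. -/
def confExp (n d : ℕ) (f : Config n d → ℝ) : ℝ :=
  (∑ Γ : Config n d, f Γ) / (Fintype.card (Config n d) : ℝ)

/-- The number of balanced proper `k`-colorings. -/
def Zbal (n d k : ℕ) (Γ : Config n d) : ℕ :=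
  (univ.filter fun σ : Fin n → Fin k => BalancedCol σ ∧ ProperCol Γ σ).card

def EZbal (n d k : ℕ) : ℝ := confExp n d fun Γ => (Zbal n d k Γ : ℝ)

/-- A good `k`-coloring: balanced, proper, separable and with cluster of size at most
`E[Z_bal]/n`. -/
def GoodCol (n d k : ℕ) (Γ : Config n d) (σ : Fin n → Fin k) : Prop :=
  BalancedCol σ ∧ ProperCol Γ σ ∧ SeparableCol Γ σ ∧
    ((cluster Γ σ).card : ℝ) ≤ EZbal n d k / (n : ℝ)

def Zgood (n d k : ℕ) (Γ : Config n d) : ℕ :=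
  (univ.filter fun σ : Fin n → Fin k => GoodCol n d k Γ σ).card

def EZgood (n d k : ℕ) : ℝ := confExp n d fun Γ => (Zgood n d k Γ : ℝ)

/-- The number of proper `k`-colorings. -/
def Zcol (n d k : ℕ) (Γ : Config n d) : ℕ :=
  (univ.filter fun σ : Fin n → Fin k => ProperCol Γ σ).card

def EZcol (n d k : ℕ) : ℝ := confExp n d fun Γ => (Zcol n d k Γ : ℝ)

/-- A balanced `k`-coloring is skewed if some pair of color classes carries an atypical
number of edges. -/
def Skewed {n d k : ℕ} (Γ : Config n d) (σ : Fin n → Fin k) : Prop :=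
  ∃ i j : Fin k, i < j ∧
    Real.sqrt n * Real.log n <
      |(eConf Γ (colorClass σ i) (colorClass σ j) : ℝ) -
        (d : ℝ) * n / ((k : ℝ) * ((k : ℝ) - 1))|

/-- The number of skewed balanced proper `k`-colorings. -/
def Zskew (n d k : ℕ) (Γ : Config n d) : ℕ :=
  (univ.filter fun σ : Fin n → Fin k =>
    BalancedCol σ ∧ ProperCol Γ σ ∧ Skewed Γ σ).card

def EZskew (n d k : ℕ) : ℝ := confExp n d fun Γ => (Zskew n d k Γ : ℝ)

/-- The planted conditions on the edge-density matrix `μ`. -/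
def Planted (n d k : ℕ) (μ : Fin k → Fin k → ℝ) : Prop :=
  (∀ i j, 0 ≤ μ i j) ∧ (∑ i, ∑ j, μ i j = 1) ∧ (∀ i j, μ i j = μ j i) ∧
  (∀ i, μ i i = 0) ∧ (∀ i j, ∃ m : ℕ, μ i j * ((d : ℝ) * n) = m) ∧
  (∀ i j, i ≠ j → |μ i j - 1 / ((k : ℝ) * ((k : ℝ) - 1))| ≤ (n : ℝ) ^ (-(1/3) : ℝ))

/-- `Γ` is compatible with the planted data `(σ,μ)`: `e_Γ(V_i,V_j) = μ_ij·d·n` for all `i,j`. -/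
def PlantedMatch {n d k : ℕ} (σ : Fin n → Fin k) (μ : Fin k → Fin k → ℝ)
    (Γ : Config n d) : Prop :=
  ∀ i j, (eConf Γ (colorClass σ i) (colorClass σ j) : ℝ) = μ i j * ((d : ℝ) * n)

/-- Probability of an event under the planted model `Γ_{σ,μ}` (uniform among configurations
compatible with `(σ,μ)`). -/
def plantedProb (n d k : ℕ) (σ : Fin n → Fin k) (μ : Fin k → Fin k → ℝ)
    (p : Config n d → Prop) : ℝ :=
  ((univ.filter fun Γ : Config n d => PlantedMatch σ μ Γ ∧ p Γ).card : ℝ) /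
    ((univ.filter fun Γ : Config n d => PlantedMatch σ μ Γ).card : ℝ)

/-- `V'` satisfies the `(σ,ℓ)`-core condition. -/
def IsCoreSet {n d k : ℕ} (Γ : Config n d) (σ : Fin n → Fin k) (ℓ : ℕ)
    (V' : Finset (Fin n)) : Prop :=
  ∀ v ∈ V', ∀ i : Fin k, i ≠ σ v → ℓ ≤ eConf Γ {v} (V' ∩ colorClass σ i)

/-- The `(σ,ℓ)`-core: the largest subset satisfying the core condition (equivalently, the
union of all such subsets). -/
def coreSet {n d k : ℕ} (Γ : Config n d) (σ : Fin n → Fin k) (ℓ : ℕ) : Finset (Fin n) :=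
  univ.filter fun v => ∃ V' : Finset (Fin n), IsCoreSet Γ σ ℓ V' ∧ v ∈ V'

/-- A vertex `u` is `a`-free: there are at least `a+1` colors `i` such that `u` has no
matched clone in the core intersected with `σ⁻¹(i)`. -/
def FreeVertex {n d k : ℕ} (Γ : Config n d) (σ : Fin n → Fin k) (ℓ a : ℕ)
    (u : Fin n) : Prop :=
  a + 1 ≤ (univ.filter fun i : Fin k =>
    eConf Γ {u} (coreSet Γ σ ℓ ∩ colorClass σ i) = 0).card

/-- A `(d,n)`-admissible pair `(ρ,μ)`. -/
def Admissible (K d n : ℕ) (ρ : Fin K → ℝ) (μ : Fin K → Fin K → ℝ) : Prop :=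
  (∀ i, 0 ≤ ρ i) ∧ (∑ i, ρ i = 1) ∧
  (∀ i j, 0 ≤ μ i j) ∧ (∑ i, ∑ j, μ i j = 1) ∧
  (∀ i j, μ i j = μ j i) ∧
  (∀ i, ∃ m : ℕ, ρ i * (n : ℝ) = m) ∧
  (∀ i j, ∃ m : ℕ, μ i j * ((d : ℝ) * n) = m) ∧
  (∀ i, ∑ j, μ i j = ρ i)

/-- `P` is a partition of `V` into classes of sizes `ρ_i·n`. -/
def IsPartitionWithSizes {K n : ℕ} (ρ : Fin K → ℝ) (P : Fin K → Finset (Fin n)) : Prop :=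
  (∀ v : Fin n, ∃! i, v ∈ P i) ∧ ∀ i, ((P i).card : ℝ) = ρ i * (n : ℝ)

/-- Kullback–Leibler divergence `D(μ‖ρ⊗ρ)`.  (Note `Real.log 0 = 0`, so the convention
`0·ln 0 = 0` is automatic.) -/
def KLpair {K : ℕ} (μ : Fin K → Fin K → ℝ) (ρ : Fin K → ℝ) : ℝ :=
  ∑ i, ∑ j, μ i j * Real.log (μ i j / (ρ i * ρ j))

/-- Kullback–Leibler divergence of two matrices on `[K]²`. -/
def KLmat {K : ℕ} (μ ν : Fin K → Fin K → ℝ) : ℝ :=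
  ∑ i, ∑ j, μ i j * Real.log (μ i j / ν i j)

/-- Entropy `H(ρ)` (convention `0·ln 0 = 0` via `Real.log 0 = 0`). -/
def Hent {K : ℕ} (ρ : Fin K → ℝ) : ℝ := -∑ i, ρ i * Real.log (ρ i)

/-- Number of ordered partitions realizing sizes `ρ` and edge densities `μ`. -/
def Zpart (K n d : ℕ) (ρ : Fin K → ℝ) (μ : Fin K → Fin K → ℝ) (Γ : Config n d) : ℕ :=
  (univ.filter fun P : Fin K → Finset (Fin n) =>
    IsPartitionWithSizes ρ P ∧
      ∀ i j, (eConf Γ (P i) (P j) : ℝ) = μ i j * ((d : ℝ) * n)).card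

def EZpart (K n d : ℕ) (ρ : Fin K → ℝ) (μ : Fin K → Fin K → ℝ) : ℝ :=
  confExp n d fun Γ => (Zpart K n d ρ μ Γ : ℝ)

/-- Number of proper colorings with class sizes `ρ_i·n`. -/
def Zrho (n d k : ℕ) (ρ : Fin k → ℝ) (Γ : Config n d) : ℕ :=
  (univ.filter fun σ : Fin n → Fin k =>
    ProperCol Γ σ ∧ ∀ i, ((colorClass σ i).card : ℝ) = ρ i * (n : ℝ)).card

def EZrho (n d k : ℕ) (ρ : Fin k → ℝ) : ℝ :=
  confExp n d fun Γ => (Zrho n d k ρ Γ : ℝ)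

/-- Number of pairs of balanced proper `k`-colorings with overlap matrix `ρ`. -/
def Zoverlap (n d k : ℕ) (ρ : Fin k → Fin k → ℝ) (Γ : Config n d) : ℕ :=
  (univ.filter fun st : (Fin n → Fin k) × (Fin n → Fin k) =>
    BalancedCol st.1 ∧ BalancedCol st.2 ∧ ProperCol Γ st.1 ∧ ProperCol Γ st.2 ∧
      ∀ i j, overlap st.1 st.2 i j = ρ i j).card

def EZoverlap (n d k : ℕ) (ρ : Fin k → Fin k → ℝ) : ℝ :=
  confExp n d fun Γ => (Zoverlap n d k ρ Γ : ℝ)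

/-- Doubly-stochastic `k×k` matrix. -/
def DStoch (k : ℕ) (ρ : Fin k → Fin k → ℝ) : Prop :=
  (∀ i j, 0 ≤ ρ i j) ∧ (∀ i, ∑ j, ρ i j = 1) ∧ (∀ j, ∑ i, ρ i j = 1)

/-- The second-moment function
`f(ρ) = ln k − (1/k)·Σ ρ_ij ln ρ_ij + (d/2)·ln(1 − 2/k + (1/k²)·Σ ρ_ij²)`. -/
def fBethe (k d : ℕ) (ρ : Fin k → Fin k → ℝ) : ℝ :=
  Real.log k - (1 / (k : ℝ)) * ∑ i, ∑ j, ρ i j * Real.log (ρ i j) +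
    ((d : ℝ) / 2) *
      Real.log (1 - 2 / (k : ℝ) + (1 / (k : ℝ) ^ 2) * ∑ i, ∑ j, (ρ i j) ^ 2)

/-- Simple `d`-regular graphs on `Fin n`, encoded as boolean adjacency matrices. -/
def IsRegGraph (n d : ℕ) (A : Fin n → Fin n → Bool) : Prop :=
  (∀ v w, A v w = A w v) ∧ (∀ v, A v v = false) ∧
  (∀ v, (univ.filter fun w => A v w = true).card = d)

/-- Proper `k`-colorability of the graph with adjacency matrix `A`. -/
def GraphColorable (n k : ℕ) (A : Fin n → Fin n → Bool) : Prop :=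
  ∃ σ : Fin n → Fin k, ∀ v w : Fin n, A v w = true → σ v ≠ σ w

/-- Probability of an event for the uniformly random simple `d`-regular graph on `n`
vertices. -/
def regProb (n d : ℕ) (p : (Fin n → Fin n → Bool) → Prop) : ℝ :=
  ((univ.filter fun A : Fin n → Fin n → Bool => IsRegGraph n d A ∧ p A).card : ℝ) /
    ((univ.filter fun A : Fin n → Fin n → Bool => IsRegGraph n d A).card : ℝ)

/-- The event `p` holds w.h.p. for `G(n,d)`, i.e. its probability tends to `1` as `n → ∞`
along `n` with `d·n` even. -/
def WHP (d : ℕ) (p : (n : ℕ) → (Fin n → Fin n → Bool) → Prop) : Prop :=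
  ∀ δ : ℝ, 0 < δ → ∃ N : ℕ, ∀ n : ℕ, N ≤ n → Even (d * n) →
    1 - δ ≤ regProb n d (p n)

/-- The chromatic number of the graph with adjacency matrix `A`. -/
def chromNum (n : ℕ) (A : Fin n → Fin n → Bool) : ℕ :=
  sInf {k : ℕ | GraphColorable n k A}

/-- Probability that a uniformly random `s`-subset `S ⊆ U×[d]` satisfies
`|S ∩ ({v}×[d])| = t v` for all `v`. -/
def pSubset (u d s : ℕ) (t : Fin u → ℕ) : ℝ :=
  ((((univ : Finset (Fin u × Fin d)).powersetCard s).filter fun S =>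
      ∀ v : Fin u, (S.filter fun x => x.1 = v).card = t v).card : ℝ) /
    (((univ : Finset (Fin u × Fin d)).powersetCard s).card : ℝ)

/-- Model for a family of `u` independent `Bin(d, s/(d·u))` variables: each clone `(v,j)`
carries an independent uniform label in `Fin (d·u)` and is a success iff the label is `< s`;
`binCount u d s ω v` is the number of successes among the `d` clones of `v`. -/
def binCount (u d s : ℕ) (ω : Fin u × Fin d → Fin (d * u)) (v : Fin u) : ℕ :=
  (univ.filter fun j : Fin d => (ω (v, j)).1 < s).card

/-- `P[∀ v, b_v = t v]` for independent `b_v ~ Bin(d, s/(d·u))`. -/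
def pBin (u d s : ℕ) (t : Fin u → ℕ) : ℝ :=
  ((univ.filter fun ω : Fin u × Fin d → Fin (d * u) =>
      ∀ v, binCount u d s ω v = t v).card : ℝ) /
    (Fintype.card (Fin u × Fin d → Fin (d * u)) : ℝ)

/-- `P[∀ v, b_v = t v | Σ_v b_v = s]` for independent `b_v ~ Bin(d, s/(d·u))`. -/
def pBinCond (u d s : ℕ) (t : Fin u → ℕ) : ℝ :=
  ((univ.filter fun ω : Fin u × Fin d → Fin (d * u) =>
      (∀ v, binCount u d s ω v = t v) ∧ (∑ v, binCount u d s ω v) = s).card : ℝ) /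
    ((univ.filter fun ω : Fin u × Fin d → Fin (d * u) =>
      (∑ v, binCount u d s ω v) = s).card : ℝ)

end RRG

end

open RRG

section Statement3Aux

open Finset Filter
open scoped Nat

set_option maxHeartbeats 1000000

namespace Statement3Aux

lemma stirling_lower (n : ℕ) (hn : 1 ≤ n) :
    Real.sqrt Real.pi * (Real.sqrt (2*n) * ((n:ℝ)/Real.exp 1)^n) ≤ n ! := by
  have h1 : Real.sqrt Real.pi ≤ Stirling.stirlingSeq n := by
    obtain ⟨k, rfl⟩ := Nat.exists_eq_add_of_le hn
    have ht : Tendsto (Stirling.stirlingSeq ∘ Nat.succ) atTop (nhds (Real.sqrt Real.pi)) :=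
      Stirling.tendsto_stirlingSeq_sqrt_pi.comp (tendsto_add_atTop_nat 1)
    simpa [Nat.add_comm] using Stirling.stirlingSeq'_antitone.le_of_tendsto ht k
  have h2 : (0:ℝ) < Real.sqrt (2*n) * ((n:ℝ)/Real.exp 1)^n := by
    have : (0:ℝ) < n := by exact_mod_cast hn
    positivity
  have h3 := mul_le_mul_of_nonneg_right h1 h2.le
  rwa [Stirling.stirlingSeq, div_mul_cancel₀ _ h2.ne'] at h3

lemma stirling_upper (n : ℕ) (hn : 1 ≤ n) :
    (n ! : ℝ) ≤ (Real.exp 1 / Real.sqrt 2) * (Real.sqrt (2*n) * ((n:ℝ)/Real.exp 1)^n) := by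
  have h1 : Stirling.stirlingSeq n ≤ Real.exp 1 / Real.sqrt 2 := by
    obtain ⟨k, rfl⟩ := Nat.exists_eq_add_of_le hn
    rw [← Stirling.stirlingSeq_one]
    simpa [Nat.add_comm] using Stirling.stirlingSeq'_antitone (Nat.zero_le k)
  have h2 : (0:ℝ) < Real.sqrt (2*n) * ((n:ℝ)/Real.exp 1)^n := by
    have : (0:ℝ) < n := by exact_mod_cast hn
    positivity
  have h3 := mul_le_mul_of_nonneg_right h1 h2.le
  rwa [Stirling.stirlingSeq, div_mul_cancel₀ _ h2.ne'] at h3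

lemma central_bound (m s : ℕ) (h1 : 1 ≤ s) (h2 : s ≤ m) :
    (m:ℝ)^m ≤ Real.exp 1 ^ 2 * Real.sqrt m *
      ((m.choose s : ℝ) * ((s:ℝ)^s * ((m - s : ℕ):ℝ)^(m - s))) := by
  have hm1 : 1 ≤ m := h1.trans h2
  have hmpos : (0:ℝ) < m := by exact_mod_cast hm1
  have hsqm : 1 ≤ Real.sqrt m := by
    rw [show (1:ℝ) = Real.sqrt 1 by simp]
    exact Real.sqrt_le_sqrt (by exact_mod_cast hm1)
  have he2 : (1:ℝ) ≤ Real.exp 1 ^ 2 := one_le_pow₀ (Real.one_le_exp zero_le_one)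
  rcases eq_or_lt_of_le h2 with rfl | hlt
  · simp only [Nat.sub_self, pow_zero, Nat.choose_self, Nat.cast_one, one_mul, mul_one]
    have h1' : (1:ℝ) ≤ Real.exp 1 ^ 2 * Real.sqrt s := by nlinarith
    nlinarith [mul_nonneg (sub_nonneg.mpr h1')
      (pow_nonneg (show (0:ℝ) ≤ s by positivity) s)]
  · set r := m - s with hrdef
    have hr1 : 1 ≤ r := by omega
    have hsr : s + r = m := by omega
    have hrpos : (0:ℝ) < r := by exact_mod_cast hr1
    have hspos : (0:ℝ) < s := by exact_mod_cast h1
    have hs! := stirling_upper s h1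
    have hr! := stirling_upper r hr1
    have hm! := stirling_lower m hm1
    have hfacN := Nat.choose_mul_factorial_mul_factorial h2
    have hfac : (m.choose s : ℝ) * ((s)! : ℝ) * ((r)! : ℝ) = ((m)! : ℝ) := by
      exact_mod_cast congrArg (Nat.cast : ℕ → ℝ) hfacN
    have hPpos : (0:ℝ) < ((s)! : ℝ) * ((r)! : ℝ) := by positivity
    rw [← mul_le_mul_iff_of_pos_right hPpos]
    have hR : Real.exp 1 ^ 2 * Real.sqrt m *
        ((m.choose s : ℝ) * ((s:ℝ)^s * ((r:ℕ):ℝ)^r)) * (((s)! : ℝ) * ((r)! : ℝ))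
        = Real.exp 1 ^ 2 * Real.sqrt m * ((s:ℝ)^s * ((r:ℕ):ℝ)^r) * ((m)! : ℝ) := by
      rw [← hfac]; ring
    rw [hR]
    set e := Real.exp 1 with hedef
    have hepos : (0:ℝ) < e := Real.exp_pos 1
    have hesplit : e ^ m = e ^ s * e ^ r := by rw [← pow_add, hsr]
    have hA : ((s)! : ℝ) * ((r)! : ℝ) ≤
        ((e / Real.sqrt 2) * (Real.sqrt (2*s) * ((s:ℝ)/e)^s)) *
        ((e / Real.sqrt 2) * (Real.sqrt (2*r) * ((r:ℝ)/e)^r)) :=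
      mul_le_mul hs! hr! (by positivity) (by positivity)
    have hLHS : (m:ℝ)^m * (((s)! : ℝ) * ((r)! : ℝ)) ≤
        (m:ℝ)^m * (((e / Real.sqrt 2) * (Real.sqrt (2*s) * ((s:ℝ)/e)^s)) *
        ((e / Real.sqrt 2) * (Real.sqrt (2*r) * ((r:ℝ)/e)^r))) :=
      mul_le_mul_of_nonneg_left hA (by positivity)
    have hRHS : e ^ 2 * Real.sqrt m * ((s:ℝ)^s * ((r:ℕ):ℝ)^r) *
        (Real.sqrt Real.pi * (Real.sqrt (2*m) * ((m:ℝ)/e)^m)) ≤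
        e ^ 2 * Real.sqrt m * ((s:ℝ)^s * ((r:ℕ):ℝ)^r) * ((m)! : ℝ) :=
      mul_le_mul_of_nonneg_left hm! (by positivity)
    refine le_trans hLHS (le_trans ?_ hRHS)
    set X : ℝ := (m:ℝ)^m * (s:ℝ)^s * ((r:ℕ):ℝ)^r / e ^ m with hXdef
    have hXpos : 0 < X := by positivity
    have hLeq : (m:ℝ)^m * (((e / Real.sqrt 2) * (Real.sqrt (2*s) * ((s:ℝ)/e)^s)) *
        ((e / Real.sqrt 2) * (Real.sqrt (2*r) * ((r:ℝ)/e)^r)))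
        = ((e / Real.sqrt 2) * (e / Real.sqrt 2) * (Real.sqrt (2*s) * Real.sqrt (2*r))) * X := by
      simp only [hXdef, div_pow, hesplit]
      ring
    have hReq : e ^ 2 * Real.sqrt m * ((s:ℝ)^s * ((r:ℕ):ℝ)^r) *
        (Real.sqrt Real.pi * (Real.sqrt (2*m) * ((m:ℝ)/e)^m))
        = (e ^ 2 * Real.sqrt m * (Real.sqrt Real.pi * Real.sqrt (2*m))) * X := by
      simp only [hXdef, div_pow]
      ring
    rw [hLeq, hReq]
    refine mul_le_mul_of_nonneg_right ?_ hXpos.le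
    have e2 : Real.sqrt 2 * Real.sqrt 2 = 2 := Real.mul_self_sqrt (by norm_num)
    have eL : Real.sqrt (2*(s:ℝ)) * Real.sqrt (2*(r:ℝ)) = 2 * Real.sqrt ((s:ℝ)*(r:ℝ)) := by
      rw [← Real.sqrt_mul (by positivity), show (2*(s:ℝ))*(2*(r:ℝ)) = 2^2*((s:ℝ)*r) by ring,
        Real.sqrt_mul (by norm_num), Real.sqrt_sq (by norm_num)]
    have eM : Real.sqrt m * Real.sqrt (2*(m:ℝ)) = Real.sqrt 2 * m := by
      rw [← Real.sqrt_mul (by positivity), show (m:ℝ)*(2*m) = 2*(m:ℝ)^2 by ring,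
        Real.sqrt_mul (by norm_num), Real.sqrt_sq hmpos.le]
    have hsrle : Real.sqrt ((s:ℝ)*(r:ℝ)) ≤ (m:ℝ)/2 := by
      rw [show ((m:ℝ)/2) = Real.sqrt (((m:ℝ)/2)^2) from (Real.sqrt_sq (by positivity)).symm]
      apply Real.sqrt_le_sqrt
      have hc : (s:ℝ) + (r:ℝ) = (m:ℝ) := by exact_mod_cast hsr
      nlinarith [sq_nonneg ((s:ℝ) - (r:ℝ))]
    have hpi : (1:ℝ) ≤ Real.sqrt Real.pi := by
      rw [show (1:ℝ) = Real.sqrt 1 by simp]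
      exact Real.sqrt_le_sqrt (by nlinarith [Real.pi_gt_three])
    have hsq2 : (1:ℝ) ≤ Real.sqrt 2 := by
      rw [show (1:ℝ) = Real.sqrt 1 by simp]
      exact Real.sqrt_le_sqrt (by norm_num)
    have hdiv : (e / Real.sqrt 2) * (e / Real.sqrt 2) = e^2/2 := by
      rw [div_mul_div_comm, e2]; ring
    rw [hdiv, eL]
    calc e^2/2 * (2 * Real.sqrt ((s:ℝ)*(r:ℝ))) = e^2 * Real.sqrt ((s:ℝ)*(r:ℝ)) := by ring
      _ ≤ e^2 * ((m:ℝ)/2) := by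
          apply mul_le_mul_of_nonneg_left hsrle (by positivity)
      _ ≤ e^2 * Real.sqrt m * (Real.sqrt Real.pi * Real.sqrt (2*(m:ℝ))) := by
          have heq : e^2 * Real.sqrt m * (Real.sqrt Real.pi * Real.sqrt (2*(m:ℝ)))
              = e^2 * (Real.sqrt Real.pi * (Real.sqrt 2 * m)) := by rw [← eM]; ring
          rw [heq]
          have h1 : (m:ℝ)/2 ≤ Real.sqrt Real.pi * (Real.sqrt 2 * m) := by
            have hp2 : (1:ℝ) ≤ Real.sqrt Real.pi * Real.sqrt 2 := by nlinarith
            nlinarith [mul_le_mul_of_nonneg_right hp2 hmpos.le]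
          exact mul_le_mul_of_nonneg_left h1 (by positivity)

/-! ### Counting lemmas -/

variable {u d : ℕ}

/-- The success set of `ω`. -/
def level (u d s : ℕ) (ω : Fin u × Fin d → Fin (d*u)) : Finset (Fin u × Fin d) :=
  univ.filter fun x => ((ω x : Fin (d*u)) : ℕ) < s

lemma card_filter_val_lt (N s : ℕ) (h : s ≤ N) :
    ((univ : Finset (Fin N)).filter fun y : Fin N => (y:ℕ) < s).card = s := by
  have he : ((univ : Finset (Fin N)).filter fun y : Fin N => (y:ℕ) < s)
      = (Finset.range s).attachFin (fun m hm => lt_of_lt_of_le (Finset.mem_range.mp hm) h) := by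
    ext a
    simp [Finset.mem_attachFin]
  rw [he, Finset.card_attachFin, Finset.card_range]

lemma card_filter_val_not_lt (N s : ℕ) (h : s ≤ N) :
    ((univ : Finset (Fin N)).filter fun y : Fin N => ¬ (y:ℕ) < s).card = N - s := by
  have h2 := Finset.card_filter_add_card_filter_not
    (s := (univ : Finset (Fin N))) (p := fun y : Fin N => (y:ℕ) < s)
  rw [card_filter_val_lt N s h, Finset.card_univ, Fintype.card_fin] at h2
  omega

lemma fiber_card (S : Finset (Fin u × Fin d)) (v : Fin u) :
    (S.filter fun x => x.1 = v).card = (univ.filter fun j : Fin d => (v, j) ∈ S).card := by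
  apply Finset.card_bij'
    (i := fun (x : Fin u × Fin d) (_ : x ∈ S.filter fun x => x.1 = v) => x.2)
    (j := fun (j : Fin d) (_ : j ∈ univ.filter fun j : Fin d => (v, j) ∈ S) => (v, j))
  · intro a ha
    rw [Finset.mem_filter] at ha
    rw [Finset.mem_filter]
    refine ⟨Finset.mem_univ _, ?_⟩
    have hpe : (v, a.2) = a := Prod.ext ha.2.symm rfl
    rw [hpe]
    exact ha.1
  · intro a ha
    rw [Finset.mem_filter] at ha
    rw [Finset.mem_filter]
    exact ⟨ha.2, rfl⟩
  · intro a ha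
    rw [Finset.mem_filter] at ha
    exact Prod.ext ha.2.symm rfl
  · intro a ha
    rfl

lemma binCount_eq (s : ℕ) (ω : Fin u × Fin d → Fin (d*u)) (v : Fin u) :
    RRG.binCount u d s ω v = ((level u d s ω).filter fun x => x.1 = v).card := by
  rw [fiber_card]
  unfold RRG.binCount level
  congr 1
  ext j
  simp

lemma sum_fiber_card (S : Finset (Fin u × Fin d)) :
    ∑ v, (S.filter fun x => x.1 = v).card = S.card :=
  (Finset.card_eq_sum_card_fiberwise (f := Prod.fst) (t := univ)
    (fun x _ => Finset.mem_univ x.1)).symm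

lemma sum_binCount (s : ℕ) (ω : Fin u × Fin d → Fin (d*u)) :
    ∑ v, RRG.binCount u d s ω v = (level u d s ω).card := by
  rw [Finset.sum_congr rfl fun v _ => binCount_eq s ω v]
  exact sum_fiber_card _

lemma card_level_eq (s : ℕ) (hs : s ≤ d*u) (S : Finset (Fin u × Fin d)) :
    (univ.filter fun ω : Fin u × Fin d → Fin (d*u) => level u d s ω = S).card
      = s ^ S.card * (d*u - s) ^ (u*d - S.card) := by
  classical
  have hset : (univ.filter fun ω : Fin u × Fin d → Fin (d*u) => level u d s ω = S)
      = Fintype.piFinset (fun x => if x ∈ S then (univ.filter fun y : Fin (d*u) => (y:ℕ) < s)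
          else (univ.filter fun y : Fin (d*u) => ¬ (y:ℕ) < s)) := by
    ext ω
    simp only [Finset.mem_filter, Finset.mem_univ, true_and, Fintype.mem_piFinset]
    rw [Finset.ext_iff]
    apply forall_congr'
    intro x
    by_cases hx : x ∈ S <;> simp [hx, level]
  rw [hset, Fintype.card_piFinset]
  have hcards : ∀ x : Fin u × Fin d,
      (if x ∈ S then (univ.filter fun y : Fin (d*u) => (y:ℕ) < s)
        else (univ.filter fun y : Fin (d*u) => ¬ (y:ℕ) < s)).card
      = if x ∈ S then s else (d*u - s) := by
    intro x
    by_cases hx : x ∈ S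
    · rw [if_pos hx, if_pos hx, card_filter_val_lt (d*u) s hs]
    · rw [if_neg hx, if_neg hx, card_filter_val_not_lt (d*u) s hs]
  rw [Finset.prod_congr rfl fun x _ => hcards x, Finset.prod_ite, Finset.prod_const,
    Finset.prod_const]
  have h1 : (univ.filter fun x : Fin u × Fin d => x ∈ S) = S := by
    ext x; simp
  have h2 : (univ.filter fun x : Fin u × Fin d => ¬ x ∈ S).card = u*d - S.card := by
    have h3 := Finset.card_filter_add_card_filter_not
      (s := (univ : Finset (Fin u × Fin d))) (p := fun x => x ∈ S)
    rw [h1, Finset.card_univ, Fintype.card_prod, Fintype.card_fin, Fintype.card_fin] at h3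
    omega
  rw [h1, h2]

lemma count_by_Q (s : ℕ) (hs : s ≤ d*u) (Q : Finset (Fin u × Fin d) → Prop) [DecidablePred Q]
    (hQ : ∀ S, Q S → S.card = s) :
    (univ.filter fun ω : Fin u × Fin d → Fin (d*u) => Q (level u d s ω)).card
      = ((univ : Finset (Fin u × Fin d)).powerset.filter Q).card
        * (s^s * (d*u - s)^(u*d - s)) := by
  classical
  rw [Finset.card_eq_sum_card_fiberwise (f := fun ω => level u d s ω)
      (t := ((univ : Finset (Fin u × Fin d)).powerset).filter Q)
      (fun ω hω => by
        replace hω := (Finset.mem_filter.mp hω).2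
        simp [Finset.mem_filter, Finset.mem_powerset, hω])]
  rw [Finset.sum_congr rfl (fun S hS => ?_), Finset.sum_const, smul_eq_mul]
  have hQS : Q S := (Finset.mem_filter.mp hS).2
  have hfil : ((univ.filter fun ω : Fin u × Fin d → Fin (d*u) => Q (level u d s ω)).filter
      (fun ω => level u d s ω = S)) = univ.filter fun ω => level u d s ω = S := by
    ext ω
    simp only [Finset.mem_filter, Finset.mem_univ, true_and]
    constructor
    · tauto
    · intro h
      exact ⟨h ▸ hQS, h⟩
  rw [hfil, card_level_eq s hs S, hQ S hQS]


lemma count_general (s : ℕ) (hs : s ≤ d*u) (p : (Fin u × Fin d → Fin (d*u)) → Prop)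
    [DecidablePred p] (Q : Finset (Fin u × Fin d) → Prop) [DecidablePred Q]
    (hpq : ∀ ω, p ω ↔ Q (level u d s ω)) (hQ : ∀ S, Q S → S.card = s)
    (F : Finset (Finset (Fin u × Fin d)))
    (hF : F = ((univ : Finset (Fin u × Fin d)).powerset).filter Q) :
    ((univ : Finset (Fin u × Fin d → Fin (d*u))).filter p).card
      = F.card * (s^s * (u*d - s)^(u*d - s)) := by
  rw [hF, Finset.filter_congr (fun ω _ => hpq ω), count_by_Q s hs Q hQ,
    show d*u - s = u*d - s from by rw [Nat.mul_comm d u]]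

end Statement3Aux

end Statement3Aux

set_option maxHeartbeats 4000000

/-- Binomial approximation of the hypergeometric-type distribution: for every
`d > 1` there is `C = C(d) > 0` such that for every `u > 1`, `1 ≤ s ≤ d·u` and every family
`t` of non-negative integers, `P[∀ v, e_v = t v] = P[∀ v, b_v = t v | Σ_v b_v = s]` and this
is at most `C·√u·P[∀ v, b_v = t v]`, where `S` is a uniform `s`-subset of `U×[d]`,
`e_v = |S ∩ ({v}×[d])|`, and the `b_v` are independent `Bin(d, s/(d·u))`. -/
theorem statement_3 :
    ∀ d : ℕ, 1 < d → ∃ C : ℝ, 0 < C ∧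
      ∀ u s : ℕ, 1 < u → 1 ≤ s → s ≤ d * u →
        ∀ t : Fin u → ℕ,
          pSubset u d s t = pBinCond u d s t ∧
          pSubset u d s t ≤ C * Real.sqrt u * pBin u d s t := by
  intro d hd
  have hd0 : (0:ℝ) < d := by exact_mod_cast Nat.lt_of_lt_of_le Nat.zero_lt_one hd.le
  refine ⟨Real.exp 1 ^ 2 * Real.sqrt d, by positivity, ?_⟩
  intro u s hu hs1 hsdu t
  classical
  have hco : d * u = u * d := Nat.mul_comm d u
  have hsud : s ≤ u * d := hco ▸ hsdu
  have hsub : d * u - s = u * d - s := by rw [hco]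
  have hchpos : 0 < (u*d).choose s := Nat.choose_pos hsud
  have hpcard : ((univ : Finset (Fin u × Fin d)).powersetCard s).card = (u*d).choose s := by
    rw [Finset.card_powersetCard, Finset.card_univ, Fintype.card_prod,
      Fintype.card_fin, Fintype.card_fin]
  have hKpos : 0 < s ^ s * (u*d - s) ^ (u*d - s) := by
    have h1 : 0 < s ^ s := pow_pos (by omega) s
    rcases Nat.eq_or_lt_of_le hsud with h | h
    · have h0 : u*d - s = 0 := by omega
      rw [h0, pow_zero, mul_one]; exact h1
    · exact Nat.mul_pos h1 (pow_pos (by omega) _)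
  have hKne : ((s ^ s * (u*d - s) ^ (u*d - s) : ℕ) : ℝ) ≠ 0 := by
    exact_mod_cast hKpos.ne'
  -- the three counts
  have hnum1 : ((univ : Finset (Fin u × Fin d → Fin (d*u))).filter fun ω =>
      (∀ v, binCount u d s ω v = t v) ∧ (∑ v, binCount u d s ω v) = s).card
      = (((univ : Finset (Fin u × Fin d)).powersetCard s).filter fun S =>
          ∀ v : Fin u, (S.filter fun x => x.1 = v).card = t v).card
        * (s^s * (u*d - s)^(u*d - s)) := by
    refine Statement3Aux.count_general s hsdu _
      (fun S => (∀ v : Fin u, (S.filter fun x => x.1 = v).card = t v) ∧ S.card = s)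
      (fun ω => ?_) (fun S hS => hS.2) _ ?_
    · simp only [Statement3Aux.binCount_eq s ω, Statement3Aux.sum_binCount s ω,
        Statement3Aux.sum_fiber_card]
    · ext S
      simp only [Finset.mem_filter, Finset.mem_powerset, Finset.mem_powersetCard]
      tauto
  have hden1 : ((univ : Finset (Fin u × Fin d → Fin (d*u))).filter fun ω =>
      (∑ v, binCount u d s ω v) = s).card
      = (u*d).choose s * (s^s * (u*d - s)^(u*d - s)) := by
    rw [← hpcard]
    refine Statement3Aux.count_general s hsdu _ (fun S => S.card = s)
      (fun ω => ?_) (fun S hS => hS) _ Finset.powersetCard_eq_filter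
    · simp only [Statement3Aux.sum_binCount s ω]
  -- equality part
  have heq : pSubset u d s t = pBinCond u d s t := by
    unfold pSubset pBinCond
    have hKne' : ((s:ℝ)^s * ((u*d - s : ℕ):ℝ)^(u*d - s)) ≠ 0 := by
      intro h
      apply hKne
      rw [← h]
      push_cast
      ring
    rw [hnum1, hden1, hpcard]
    push_cast
    rw [mul_div_mul_right _ _ hKne']
  refine ⟨heq, ?_⟩
  -- inequality part
  by_cases hsum : ∑ v, t v = s
  · have hbin1 : ((univ : Finset (Fin u × Fin d → Fin (d*u))).filter fun ω =>
        ∀ v, binCount u d s ω v = t v).card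
        = (((univ : Finset (Fin u × Fin d)).powersetCard s).filter fun S =>
            ∀ v : Fin u, (S.filter fun x => x.1 = v).card = t v).card
          * (s^s * (u*d - s)^(u*d - s)) := by
      have hQc : ∀ S : Finset (Fin u × Fin d),
          (∀ v : Fin u, (S.filter fun x => x.1 = v).card = t v) → S.card = s := by
        intro S hS
        rw [← Statement3Aux.sum_fiber_card S,
          Finset.sum_congr rfl fun v _ => hS v, hsum]
      refine Statement3Aux.count_general s hsdu _
        (fun S => ∀ v : Fin u, (S.filter fun x => x.1 = v).card = t v)
        (fun ω => ?_) hQc _ ?_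
      · simp only [Statement3Aux.binCount_eq s ω]
      · ext S
        simp only [Finset.mem_filter, Finset.mem_powerset, Finset.mem_powersetCard]
        constructor
        · rintro ⟨⟨h1, _⟩, h2⟩
          exact ⟨h1, h2⟩
        · rintro ⟨h1, h2⟩
          exact ⟨⟨h1, hQc S h2⟩, h2⟩
    have hfc : Fintype.card (Fin u × Fin d → Fin (d*u)) = (d*u)^(u*d) := by
      rw [Fintype.card_fun, Fintype.card_fin, Fintype.card_prod,
        Fintype.card_fin, Fintype.card_fin]
    unfold pSubset pBin
    rw [hbin1, hpcard, hfc]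
    have hchposR : (0:ℝ) < ((u*d).choose s : ℝ) := by exact_mod_cast hchpos
    have hDposR : (0:ℝ) < (((d*u)^(u*d) : ℕ) : ℝ) := by
      have : 0 < (d*u)^(u*d) := pow_pos (by omega) _
      exact_mod_cast this
    rw [show Real.exp 1 ^ 2 * Real.sqrt d * Real.sqrt u *
        ((((((univ : Finset (Fin u × Fin d)).powersetCard s).filter fun S =>
          ∀ v : Fin u, (S.filter fun x => x.1 = v).card = t v).card
            * (s^s * (u*d - s)^(u*d - s)) : ℕ) : ℝ) / (((d*u)^(u*d) : ℕ) : ℝ))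
        = (Real.exp 1 ^ 2 * Real.sqrt d * Real.sqrt u *
          (((((univ : Finset (Fin u × Fin d)).powersetCard s).filter fun S =>
          ∀ v : Fin u, (S.filter fun x => x.1 = v).card = t v).card
            * (s^s * (u*d - s)^(u*d - s)) : ℕ) : ℝ)) / (((d*u)^(u*d) : ℕ) : ℝ)
      from (mul_div_assoc _ _ _).symm]
    rw [div_le_div_iff₀ hchposR hDposR]
    have key := Statement3Aux.central_bound (u*d) s hs1 hsud
    have hDeq : (((d*u)^(u*d) : ℕ) : ℝ) = ((u*d : ℕ) : ℝ)^(u*d) := by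
      rw [show (d*u)^(u*d) = (u*d)^(u*d) by rw [hco], Nat.cast_pow]
    have hsq : Real.sqrt ((u*d : ℕ) : ℝ) = Real.sqrt d * Real.sqrt u := by
      rw [Nat.cast_mul, Real.sqrt_mul (by positivity), mul_comm]
    set M : ℕ := (((univ : Finset (Fin u × Fin d)).powersetCard s).filter fun S =>
      ∀ v : Fin u, (S.filter fun x => x.1 = v).card = t v).card with hMdef
    push_cast
    calc (M : ℝ) * (((d:ℝ)*(u:ℝ))^(u*d))
        = (M:ℝ) * (((u*d : ℕ):ℝ)^(u*d)) := by push_cast; ring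
      _ ≤ (M:ℝ) * (Real.exp 1 ^ 2 * Real.sqrt ((u*d : ℕ):ℝ) *
            (((u*d).choose s : ℝ) * ((s:ℝ)^s * ((u*d - s : ℕ):ℝ)^(u*d - s)))) :=
          mul_le_mul_of_nonneg_left key (by positivity)
      _ = Real.exp 1 ^ 2 * Real.sqrt d * Real.sqrt u *
            ((M:ℝ) * ((s:ℝ)^s * ((u*d - s : ℕ):ℝ)^(u*d - s))) * ((u*d).choose s : ℝ) := by
          rw [hsq]; ring
  · -- sum of t is not s : pSubset = 0
    have hM0 : (((univ : Finset (Fin u × Fin d)).powersetCard s).filter fun S =>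
        ∀ v : Fin u, (S.filter fun x => x.1 = v).card = t v).card = 0 := by
      rw [Finset.card_eq_zero, Finset.eq_empty_iff_forall_notMem]
      intro S hS
      rw [Finset.mem_filter, Finset.mem_powersetCard] at hS
      obtain ⟨⟨_, hcard⟩, hall⟩ := hS
      apply hsum
      rw [← hcard, ← Statement3Aux.sum_fiber_card S]
      exact Finset.sum_congr rfl fun v _ => (hall v).symm
    have h0 : pSubset u d s t = 0 := by
      unfold pSubset
      rw [hM0]
      simp
    rw [h0]
    have hb : 0 ≤ pBin u d s t := by
      unfold pBin
      positivity
    positivity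
end

section
/- There is an absolute constant k0 such that the following holds for every integer k ≥ k0 and every integer d with (2k−2)·ln(k−1) ≤ d ≤ (2k−1)·ln k. There exists η > 0 such that every doubly-stochastic k×k matrix ρ with max_{i,j}|ρ_ij − 1/k| < η satisfies f(ρ) ≤ f(ρ̄) − (1/4)·Σ_{i,j}(ρ_ij − 1/k)², where ρ̄ is the k×k matrix with all entries equal to 1/k. -/
open Finset
open scoped Classical

open RRG

lemma hasDerivF (t : ℝ) (ht : 0 < t) :
    HasDerivAt (fun x : ℝ => x * Real.log x - x + 1 - 3/8*(x-1)^2)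
      (Real.log t - 3/4*(t-1)) t := by
  have h1 : HasDerivAt (fun x : ℝ => x * Real.log x) (Real.log t + 1) t := by
    have := (hasDerivAt_id' t).fun_mul (Real.hasDerivAt_log ht.ne')
    simpa [mul_inv_cancel₀ ht.ne'] using this
  have h2 : HasDerivAt (fun x : ℝ => 3/8*(x-1)^2) (3/4*(t-1)) t := by
    have h : HasDerivAt (fun x : ℝ => (x-1)^2) (2*(t-1)) t := by
      simpa using ((hasDerivAt_id' t).sub_const 1).fun_pow 2
    have := h.const_mul (3/8 : ℝ)
    exact this.congr_deriv (by ring)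
  have := ((h1.sub (hasDerivAt_id' t)).add_const 1).sub h2
  exact this.congr_deriv (by ring)

lemma keyineq {t : ℝ} (h1 : 2/3 ≤ t) (h2 : t ≤ 4/3) :
    3/8*(t-1)^2 ≤ t * Real.log t - t + 1 := by
  set F : ℝ → ℝ := fun x => x * Real.log x - x + 1 - 3/8*(x-1)^2 with hF
  have hF1 : F 1 = 0 := by simp [hF]
  have hder : ∀ x ∈ Set.Ioo (2/3 : ℝ) (4/3 : ℝ), deriv F x = Real.log x - 3/4*(x-1) := by
    intro x hx
    exact (hasDerivF x (by linarith [hx.1])).deriv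
  have hcont : ContinuousOn F (Set.Icc (2/3 : ℝ) (4/3)) := by
    apply ContinuousOn.sub
    apply ContinuousOn.add
    apply ContinuousOn.sub
    · exact continuousOn_id.mul (Real.continuousOn_log.mono (by
        intro x hx; simp at hx ⊢; intro h; rw [h] at hx; norm_num at hx))
    · exact continuousOn_id
    · exact continuousOn_const
    · exact (continuousOn_const.mul ((continuousOn_id.sub continuousOn_const).pow 2))
  suffices h : 0 ≤ F t by simp only [hF] at h; linarith
  rcases le_total t 1 with hle | hle
  · have hanti : AntitoneOn F (Set.Icc (2/3 : ℝ) 1) := by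
      apply antitoneOn_of_deriv_nonpos (convex_Icc _ _)
      · exact hcont.mono (Set.Icc_subset_Icc le_rfl (by norm_num))
      · intro x hx
        rw [interior_Icc] at hx
        exact ((hasDerivF x (by linarith [hx.1])).differentiableAt).differentiableWithinAt
      · intro x hx
        rw [interior_Icc] at hx
        rw [(hasDerivF x (by linarith [hx.1])).deriv]
        have := Real.log_le_sub_one_of_pos (show (0:ℝ) < x by linarith [hx.1])
        nlinarith [hx.1, hx.2]
    have := hanti (Set.mem_Icc.2 ⟨h1, hle⟩) (Set.mem_Icc.2 ⟨by norm_num, le_rfl⟩) hle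
    linarith [hF1 ▸ this]
  · have hmono : MonotoneOn F (Set.Icc (1 : ℝ) (4/3)) := by
      apply monotoneOn_of_deriv_nonneg (convex_Icc _ _)
      · exact hcont.mono (Set.Icc_subset_Icc (by norm_num) le_rfl)
      · intro x hx
        rw [interior_Icc] at hx
        exact ((hasDerivF x (by linarith [hx.1])).differentiableAt).differentiableWithinAt
      · intro x hx
        rw [interior_Icc] at hx
        rw [(hasDerivF x (by linarith [hx.1])).deriv]
        have hx0 : (0:ℝ) < x := by linarith [hx.1]
        have hlog : 1 - x⁻¹ ≤ Real.log x := by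
          have := Real.log_le_sub_one_of_pos (inv_pos.2 hx0)
          rw [Real.log_inv] at this; linarith
        have hinv : x * x⁻¹ = 1 := mul_inv_cancel₀ hx0.ne'
        nlinarith [hx.1, hx.2]
    have := hmono (Set.mem_Icc.2 ⟨le_rfl, by norm_num⟩) (Set.mem_Icc.2 ⟨hle, h2⟩) hle
    linarith [hF1 ▸ this]

lemma tangent {c y : ℝ} (hc : 0 < c) (h1 : 2/3*c ≤ y) (h2 : y ≤ 4/3*c) :
    c * Real.log c + (Real.log c + 1) * (y - c) + (3/(8*c)) * (y-c)^2
      ≤ y * Real.log y := by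
  have hy0 : 0 < y := by nlinarith
  have ht1 : 2/3 ≤ y / c := by rw [le_div_iff₀ hc]; linarith
  have ht2 : y / c ≤ 4/3 := by rw [div_le_iff₀ hc]; linarith
  have hk := keyineq ht1 ht2
  rw [Real.log_div hy0.ne' hc.ne'] at hk
  have hk2 := mul_le_mul_of_nonneg_left hk hc.le
  have e1 : c * (3/8*(y/c-1)^2) = 3/(8*c)*(y-c)^2 := by field_simp
  have e2 : c * (y/c * (Real.log y - Real.log c) - y/c + 1)
      = y * Real.log y - y * Real.log c - y + c := by field_simp
  rw [e1, e2] at hk2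
  nlinarith [hk2]

lemma logbound {K : ℝ} (hK : 300 ≤ K) : (2*K - 1) * Real.log K ≤ (K-1)^2/4 := by
  set s := Real.sqrt K with hs
  have hK0 : (0:ℝ) ≤ K := by linarith
  have hsq : s^2 = K := Real.sq_sqrt hK0
  have hs17 : 17 ≤ s := by
    rw [hs, show (17:ℝ) = Real.sqrt 289 by
      rw [show (289:ℝ) = 17^2 by norm_num, Real.sqrt_sq]; norm_num]
    exact Real.sqrt_le_sqrt (by linarith)
  have hs0 : 0 < s := by linarith
  have hlog : Real.log K = 2 * Real.log s := by
    rw [← hsq, sq, Real.log_mul hs0.ne' hs0.ne']; ring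
  have hlogs : Real.log s ≤ s - 1 := Real.log_le_sub_one_of_pos hs0
  have hlogK0 : 0 ≤ Real.log K := Real.log_nonneg (by linarith)
  have h1 : (2*K - 1) * Real.log K ≤ (2*s^2) * (2*(s-1)) := by
    apply mul_le_mul (by nlinarith) (by rw [hlog]; linarith) hlogK0 (by nlinarith)
  nlinarith [h1, hs17, hsq]


set_option maxHeartbeats 1000000 in
/-- There is an absolute constant `k0` such that for every `k ≥ k0` and
integer `d` with `(2k−2)·ln(k−1) ≤ d ≤ (2k−1)·ln k` there is `η > 0` such that every
doubly-stochastic `k×k` matrix `ρ` with `max_{i,j}|ρ_ij − 1/k| < η` satisfies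
`f(ρ) ≤ f(ρ̄) − (1/4)·Σ_{i,j}(ρ_ij − 1/k)²`, where `ρ̄` has all entries `1/k`. -/
theorem statement_17 :
    ∃ k0 : ℕ, ∀ k : ℕ, k0 ≤ k → ∀ d : ℕ,
      (2 * (k : ℝ) - 2) * Real.log ((k : ℝ) - 1) ≤ (d : ℝ) →
      (d : ℝ) ≤ (2 * (k : ℝ) - 1) * Real.log k →
      ∃ η : ℝ, 0 < η ∧
        ∀ ρ : Fin k → Fin k → ℝ, DStoch k ρ →
          (∀ i j, |ρ i j - 1 / (k : ℝ)| < η) →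
          fBethe k d ρ ≤ fBethe k d (fun _ _ => 1 / (k : ℝ)) -
            (1 / 4) * ∑ i, ∑ j, (ρ i j - 1 / (k : ℝ)) ^ 2 := by
  refine ⟨300, fun k hk d _ hd2 => ?_⟩
  set K : ℝ := (k : ℝ) with hKdef
  have hK300 : (300:ℝ) ≤ K := by rw [hKdef]; exact_mod_cast hk
  have hK0 : (0:ℝ) < K := by linarith
  have hKne : K ≠ 0 := hK0.ne'
  have hK1ne : K - 1 ≠ 0 := by intro h; nlinarith
  refine ⟨1/(3*K), by positivity, fun ρ hρ hη => ?_⟩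
  set c : ℝ := 1 / K with hcdef
  have hc0 : 0 < c := by positivity
  have hKc : K * c = 1 := by rw [hcdef]; field_simp; try ring
  have hcne : 1 - c ≠ 0 := by
    have : c < 1 := by rw [hcdef, div_lt_one hK0]; linarith
    intro h; linarith
  have hlogc : Real.log c = -Real.log K := by rw [hcdef, one_div, Real.log_inv]
  set S : ℝ := ∑ i, ∑ j, (ρ i j - c) ^ 2 with hSdef
  have hS0 : 0 ≤ S := Finset.sum_nonneg fun i _ => Finset.sum_nonneg fun j _ => sq_nonneg _
  have hrow : ∀ i, ∑ j, ρ i j = 1 := hρ.2.1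
  have hsum : ∑ i, ∑ j, ρ i j = K := by
    rw [Finset.sum_congr rfl fun i _ => hrow i, Finset.sum_const, Finset.card_univ,
      Fintype.card_fin, nsmul_eq_mul, mul_one, ← hKdef]
  have hεsum : ∑ i, ∑ j, (ρ i j - c) = 0 := by
    simp only [Finset.sum_sub_distrib, Finset.sum_const, Finset.card_univ,
      Fintype.card_fin, nsmul_eq_mul, hsum]
    rw [← hKdef, hcdef]
    field_simp; ring
  have hsq : ∑ i, ∑ j, (ρ i j)^2 = 1 + S := by
    calc ∑ i, ∑ j, (ρ i j)^2
        = ∑ i, ∑ j, ((ρ i j - c)^2 + (2*c) * (ρ i j - c) + c^2) :=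
          Finset.sum_congr rfl fun i _ => Finset.sum_congr rfl fun j _ => by ring
      _ = S + (2*c) * ∑ i, ∑ j, (ρ i j - c) + K * (K * c^2) := by
          simp only [Finset.sum_add_distrib, Finset.sum_const, Finset.card_univ,
            Fintype.card_fin, nsmul_eq_mul, ← Finset.mul_sum]
          try rw [← hKdef]; try rw [hSdef]; try ring
      _ = 1 + S := by
          rw [hεsum]
          have h : K * (K * c^2) = 1 := by rw [hcdef]; field_simp; try ring
          rw [h]; ring
  -- entropy bound
  have hent : K * (K * (c * Real.log c)) + (3*K/8) * S
      ≤ ∑ i, ∑ j, ρ i j * Real.log (ρ i j) := by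
    have hterm : ∀ i j, c * Real.log c + (Real.log c + 1) * (ρ i j - c)
        + (3*K/8) * (ρ i j - c)^2 ≤ ρ i j * Real.log (ρ i j) := by
      intro i j
      have hab := abs_lt.1 (hη i j)
      have h38 : (3 : ℝ)/(8*c) = 3*K/8 := by rw [hcdef]; field_simp; try ring
      have he : (1:ℝ)/(3*K) = c/3 := by rw [hcdef]; ring
      have h1 : 2/3*c ≤ ρ i j := by
        have := hab.1; rw [he] at this; linarith
      have h2 : ρ i j ≤ 4/3*c := by
        have := hab.2; rw [he] at this; linarith
      have := tangent hc0 h1 h2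
      rw [h38] at this
      exact this
    calc K * (K * (c * Real.log c)) + (3*K/8) * S
        = ∑ i, ∑ j, (c * Real.log c + (Real.log c + 1) * (ρ i j - c)
            + (3*K/8) * (ρ i j - c)^2) := by
          simp only [Finset.sum_add_distrib, Finset.sum_const, Finset.card_univ,
            Fintype.card_fin, nsmul_eq_mul, ← Finset.mul_sum]
          try rw [← hKdef]; try rw [hεsum]; try rw [hSdef]; try ring
      _ ≤ ∑ i, ∑ j, ρ i j * Real.log (ρ i j) :=
          Finset.sum_le_sum fun i _ => Finset.sum_le_sum fun j _ => hterm i j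
  -- value at flat matrix
  have hflat : fBethe k d (fun _ _ => c) = 2 * Real.log K + (d:ℝ) * Real.log (1 - c) := by
    simp only [fBethe]
    rw [← hKdef]
    have h1 : ∑ i : Fin k, ∑ j : Fin k, c * Real.log c = K * (K * (c * Real.log c)) := by
      simp only [Finset.sum_const, Finset.card_univ, Fintype.card_fin, nsmul_eq_mul]
      try rw [← hKdef]; try ring
    have h2 : ∑ i : Fin k, ∑ j : Fin k, c^2 = K * (K * c^2) := by
      simp only [Finset.sum_const, Finset.card_univ, Fintype.card_fin, nsmul_eq_mul]
      try rw [← hKdef]; try ring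
    rw [h1, h2]
    have h3 : K * (K * c^2) = 1 := by rw [hcdef]; field_simp; try ring
    rw [h3]
    have harg : 1 - 2/K + (1/K^2) * 1 = (1-c)^2 := by rw [hcdef]; field_simp; ring
    rw [harg, Real.log_pow, hlogc]
    have h4 : K * (K * (c * (-Real.log K))) = (K * c) * -(K * Real.log K) := by ring
    rw [h4, hKc, one_mul]
    field_simp
    ring
  -- d bound
  have hdb : (d:ℝ) / (2*(K-1)^2) ≤ 1/8 := by
    have h1 : (d:ℝ) ≤ (K-1)^2/4 := le_trans hd2 (logbound hK300)
    rw [div_le_iff₀ (by nlinarith)]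
    nlinarith
  -- log-argument bound
  have hA : (0:ℝ) < (1-c)^2 := by positivity
  have hargpos : 0 < (1-c)^2 + S/K^2 := by positivity
  have hlogarg : Real.log ((1-c)^2 + S/K^2) ≤ 2 * Real.log (1-c) + S/(K-1)^2 := by
    have h := Real.log_le_sub_one_of_pos (div_pos hargpos hA)
    rw [Real.log_div hargpos.ne' hA.ne'] at h
    have e1 : ((1-c)^2 + S/K^2)/(1-c)^2 - 1 = S/K^2/(1-c)^2 := by field_simp; ring
    have e2 : S/K^2/(1-c)^2 = S/(K-1)^2 := by
      rw [hcdef]; rw [div_div]; congr 1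
      field_simp; try ring
    rw [e1, e2] at h
    have e3 : Real.log ((1-c)^2) = 2 * Real.log (1-c) := by
      rw [show ((1-c)^2 : ℝ) = (1-c)^(2:ℕ) by norm_num, Real.log_pow]; norm_num
    linarith [e3 ▸ h]
  -- rewrite LHS
  have hL : fBethe k d ρ = Real.log K - (1/K) * (∑ i, ∑ j, ρ i j * Real.log (ρ i j))
      + ((d:ℝ)/2) * Real.log ((1-c)^2 + S/K^2) := by
    simp only [fBethe]
    rw [← hKdef, hsq]
    rw [show (1:ℝ) - 2/K + 1/K^2 * (1+S) = (1-c)^2 + S/K^2 by rw [hcdef]; field_simp; ring]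
  -- entropy side
  have hent2 : -((1/K) * (∑ i, ∑ j, ρ i j * Real.log (ρ i j))) ≤ Real.log K - (3/8)*S := by
    have h := mul_le_mul_of_nonneg_left hent (le_of_lt (show (0:ℝ) < 1/K by positivity))
    have e : (1/K) * (K * (K * (c * Real.log c)) + 3*K/8*S)
        = -Real.log K + (3/8)*S := by
      rw [hlogc, hcdef]; field_simp
    rw [e] at h
    nlinarith [h]
  -- log side
  have hlog2 : ((d:ℝ)/2) * Real.log ((1-c)^2 + S/K^2)
      ≤ (d:ℝ) * Real.log (1-c) + (1/8)*S := by
    have hd0 : (0:ℝ) ≤ (d:ℝ)/2 := by positivity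
    have h := mul_le_mul_of_nonneg_left hlogarg hd0
    have h2 : ((d:ℝ)/2) * (S/(K-1)^2) = ((d:ℝ)/(2*(K-1)^2)) * S := by
      field_simp; try ring
    have h3 : ((d:ℝ)/(2*(K-1)^2)) * S ≤ (1/8) * S :=
      mul_le_mul_of_nonneg_right hdb hS0
    nlinarith [h, h3]
  rw [hL, hflat]
  linarith [hent2, hlog2]
end
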